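/- Let Γ, δ ∈ ℂ be nonzero with Γ·conj(δ) ≠ δ·conj(Γ), set α = conj(Γ)/(Γ·conj(δ) − δ·conj(Γ)) and β = conj(δ)/(Γ·conj(δ) − δ·conj(Γ)), let ω₊ ∈ ℂ be nonzero and ω₋ = conj(ω₊), and define φ₀₀(x,y) = exp(−(β ω₊/(2Γ)) x² + (δ/(2α ω₊)) y²). Then a₊ φ₀₀ = 0 identically on ℝ²; moreover a₋ φ₀₀ = 0 identically on ℝ² if and only if ω₊/ω₋ = −(δ Γ)/(conj(δ)·conj(Γ)). -/

import Mathlib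

open MeasureTheory

/-- Partial derivative in the `x`-direction of a function on `ℝ²`. -/
noncomputable def pdx (f : ℝ × ℝ → ℂ) : ℝ × ℝ → ℂ := fun p => fderiv ℝ f p (1, 0)

/-- Partial derivative in the `y`-direction of a function on `ℝ²`. -/
noncomputable def pdy (f : ℝ × ℝ → ℂ) : ℝ × ℝ → ℂ := fun p => fderiv ℝ f p (0, 1)

/-- `α = conj(Γ)/(Γ conj(δ) − δ conj(Γ))`. -/
noncomputable def alphaDHO (Γ δ : ℂ) : ℂ :=
  (starRingEnd ℂ) Γ / (Γ * (starRingEnd ℂ) δ - δ * (starRingEnd ℂ) Γ)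

/-- `β = conj(δ)/(Γ conj(δ) − δ conj(Γ))`. -/
noncomputable def betaDHO (Γ δ : ℂ) : ℂ :=
  (starRingEnd ℂ) δ / (Γ * (starRingEnd ℂ) δ - δ * (starRingEnd ℂ) Γ)

/-- `a f = √(ω/2)·[(βx + i(δ/ω)y) f + (Γ/ω) ∂ₓ f − iα ∂_y f]`, with the principal branch
of the complex square root (`cpow`).  Taking the parameters `(Γ, δ, ω₊)` gives `a₊`; taking
the conjugated parameters `(conj Γ, conj δ, ω₋)` gives `a₋`. -/
noncomputable def aDHO (Γ δ ω : ℂ) (f : ℝ × ℝ → ℂ) : ℝ × ℝ → ℂ := fun p =>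
  (ω / 2) ^ ((1 : ℂ) / 2) *
    ((betaDHO Γ δ * (p.1 : ℂ) + Complex.I * (δ / ω) * (p.2 : ℂ)) * f p +
      (Γ / ω) * pdx f p - Complex.I * alphaDHO Γ δ * pdy f p)


/-- `φ₀₀(x,y) = exp(−(β ω/(2Γ)) x² + (δ/(2α ω)) y²)`. -/
noncomputable def phi00DHO (Γ δ ω : ℂ) : ℝ × ℝ → ℂ := fun p =>
  Complex.exp (-(betaDHO Γ δ * ω / (2 * Γ)) * (p.1 : ℂ) ^ 2 +
    (δ / (2 * alphaDHO Γ δ * ω)) * (p.2 : ℂ) ^ 2)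

/-!
Applied to a centred Gaussian `exp (A x² + B y²)`, each ladder operator returns the Gaussian times
a linear form in `(x, y)`, so it annihilates the Gaussian exactly when both coefficients of that
form vanish. For `a₊` the exponents of `φ₀₀` are chosen to kill both coefficients. For `a₋` the
parameters are conjugated; since `D = Γ conj δ - δ conj Γ` is purely imaginary this replaces
`β, α` by `-δ / D, -Γ / D`, and both coefficients become nonzero multiples of
`conj δ conj Γ ω + δ Γ conj ω`, whose vanishing is the stated condition on `ω / conj ω`.
-/

open Complex ComplexConjugate ContinuousLinearMap

noncomputable def gaussian (A B : ℂ) : ℝ × ℝ → ℂ := fun p =>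
  exp (A * (p.1 : ℂ) ^ 2 + B * (p.2 : ℂ) ^ 2)

theorem hasFDerivAt_gaussian (A B : ℂ) (p : ℝ × ℝ) :
    HasFDerivAt (gaussian A B)
      (gaussian A B p • ((2 * A * p.1) • ofRealCLM.comp (fst ℝ ℝ ℝ) +
        (2 * B * p.2) • ofRealCLM.comp (snd ℝ ℝ ℝ))) p := by
  have h₁ : HasFDerivAt (fun q : ℝ × ℝ => (q.1 : ℂ)) (ofRealCLM.comp (fst ℝ ℝ ℝ)) p :=
    (ofRealCLM.comp (fst ℝ ℝ ℝ)).hasFDerivAt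
  have h₂ : HasFDerivAt (fun q : ℝ × ℝ => (q.2 : ℂ)) (ofRealCLM.comp (snd ℝ ℝ ℝ)) p :=
    (ofRealCLM.comp (snd ℝ ℝ ℝ)).hasFDerivAt
  have hexponent := (((h₁.mul h₁).const_mul A).add ((h₂.mul h₂).const_mul B)).cexp
  refine (hexponent.congr_fderiv ?_).congr_of_eventuallyEq (.of_forall fun q => ?_)
  · simp only [gaussian, sq]
    module
  · simp [gaussian, sq]

theorem pdx_gaussian (A B : ℂ) (p : ℝ × ℝ) :
    pdx (gaussian A B) p = 2 * A * p.1 * gaussian A B p := by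
  simp only [pdx, (hasFDerivAt_gaussian A B p).fderiv, add_apply, smul_apply, comp_apply,
    coe_fst', coe_snd', ofRealCLM_apply, ofReal_one, ofReal_zero, smul_eq_mul, mul_one, mul_zero,
    add_zero]
  ring

theorem pdy_gaussian (A B : ℂ) (p : ℝ × ℝ) :
    pdy (gaussian A B) p = 2 * B * p.2 * gaussian A B p := by
  simp only [pdy, (hasFDerivAt_gaussian A B p).fderiv, add_apply, smul_apply, comp_apply,
    coe_fst', coe_snd', ofRealCLM_apply, ofReal_one, ofReal_zero, smul_eq_mul, mul_one, mul_zero,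
    zero_add]
  ring

theorem aDHO_gaussian (Γ δ ω A B : ℂ) (p : ℝ × ℝ) :
    aDHO Γ δ ω (gaussian A B) p = (ω / 2) ^ ((1 : ℂ) / 2) *
      ((betaDHO Γ δ + Γ / ω * (2 * A)) * p.1 +
        I * (δ / ω - alphaDHO Γ δ * (2 * B)) * p.2) * gaussian A B p := by
  rw [aDHO, pdx_gaussian, pdy_gaussian]
  ring

theorem aDHO_gaussian_eq_zero_iff {Γ δ ω : ℂ} (hω : ω ≠ 0) (A B : ℂ) :
    aDHO Γ δ ω (gaussian A B) = 0 ↔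
      betaDHO Γ δ + Γ / ω * (2 * A) = 0 ∧ δ / ω - alphaDHO Γ δ * (2 * B) = 0 := by
  have hsqrt : (ω / 2) ^ ((1 : ℂ) / 2) ≠ 0 := by simp [cpow_eq_zero_iff, hω]
  have hg (p : ℝ × ℝ) : gaussian A B p ≠ 0 := exp_ne_zero _
  constructor
  · intro h
    have hx := congrFun h (1, 0)
    have hy := congrFun h (0, 1)
    simp only [aDHO_gaussian, Pi.zero_apply, mul_eq_zero, hsqrt, hg, I_ne_zero,
      ofReal_one, ofReal_zero, mul_one, mul_zero, add_zero, zero_add, false_or, or_false] at hx hy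
    exact ⟨hx, hy⟩
  · rintro ⟨hx, hy⟩
    funext p
    rw [aDHO_gaussian, hx, hy, Pi.zero_apply]
    ring

theorem phi00DHO_eq_gaussian (Γ δ ω : ℂ) :
    phi00DHO Γ δ ω = gaussian (-(betaDHO Γ δ * ω / (2 * Γ))) (δ / (2 * alphaDHO Γ δ * ω)) :=
  rfl

theorem betaDHO_conj_conj (Γ δ : ℂ) :
    betaDHO (conj Γ) (conj δ) = -(δ / (Γ * conj δ - δ * conj Γ)) := by
  rw [betaDHO, conj_conj, conj_conj, ← div_neg, neg_sub]
  ring_nf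

theorem alphaDHO_conj_conj (Γ δ : ℂ) :
    alphaDHO (conj Γ) (conj δ) = -(Γ / (Γ * conj δ - δ * conj Γ)) := by
  rw [alphaDHO, conj_conj, conj_conj, ← div_neg, neg_sub]
  ring_nf

theorem statement18 (Γ δ ω : ℂ) (hΓ : Γ ≠ 0) (hδ : δ ≠ 0)
    (hΓδ : Γ * (starRingEnd ℂ) δ ≠ δ * (starRingEnd ℂ) Γ) (hω : ω ≠ 0) :
    (aDHO Γ δ ω (phi00DHO Γ δ ω) = 0) ∧
    (aDHO ((starRingEnd ℂ) Γ) ((starRingEnd ℂ) δ) ((starRingEnd ℂ) ω)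
        (phi00DHO Γ δ ω) = 0 ↔
      ω / (starRingEnd ℂ) ω =
        -(δ * Γ) / ((starRingEnd ℂ) δ * (starRingEnd ℂ) Γ)) := by
  have hD : Γ * conj δ - δ * conj Γ ≠ 0 := sub_ne_zero.mpr hΓδ
  have hΓ' : conj Γ ≠ 0 := by simpa using hΓ
  have hδ' : conj δ ≠ 0 := by simpa using hδ
  have hω' : conj ω ≠ 0 := by simpa using hω
  rw [phi00DHO_eq_gaussian, aDHO_gaussian_eq_zero_iff hω, aDHO_gaussian_eq_zero_iff hω',
    betaDHO_conj_conj, alphaDHO_conj_conj, betaDHO, alphaDHO]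
  set D := Γ * conj δ - δ * conj Γ
  set N := conj δ * conj Γ * ω + δ * Γ * conj ω
  have hcoeff_x : -(δ / D) + conj Γ / conj ω * (2 * -(conj δ / D * ω / (2 * Γ))) =
      -N / (D * Γ * conj ω) := by
    field_simp
    ring
  have hcoeff_y : conj δ / conj ω - -(Γ / D) * (2 * (δ / (2 * (conj Γ / D) * ω))) =
      N / (conj Γ * ω * conj ω) := by
    field_simp
    ring
  have hcond : ω / conj ω = -(δ * Γ) / (conj δ * conj Γ) ↔ N = 0 := by
    rw [div_eq_div_iff hω' (mul_ne_zero hδ' hΓ')]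
    constructor <;> intro h <;> linear_combination h
  refine ⟨⟨by field_simp; ring, by field_simp; ring⟩, ?_⟩
  rw [hcoeff_x, hcoeff_y, hcond, neg_div, neg_eq_zero, div_eq_zero_iff, div_eq_zero_iff]
  simp [hD, hΓ, hΓ', hω, hω']
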